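/- A complementary basis B of a pLCP with sufficient matrix M has at most n + (n² − n)/2 adjacent complementary bases, where two complementary bases are adjacent if their complementary cones intersect in dimension n−1. -/

import Mathlib

open Matrix

/-- `M` is column sufficient. -/
def ColSuff {n : ℕ} (M : Matrix (Fin n) (Fin n) ℝ) : Prop :=
  ∀ z : Fin n → ℝ, (∀ i, z i * M.mulVec z i ≤ 0) → ∀ i, z i * M.mulVec z i = 0

/-- `M` is sufficient: both `M` and `Mᵀ` are column sufficient. -/
def Suff {n : ℕ} (M : Matrix (Fin n) (Fin n) ℝ) : Prop := ColSuff M ∧ ColSuff Mᵀ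

/-- The matrix `A = [I, -M]`, with columns indexed by `Fin n ⊕ Fin n`. -/
def Amat {n : ℕ} (M : Matrix (Fin n) (Fin n) ℝ) : Matrix (Fin n) (Fin n ⊕ Fin n) ℝ :=
  Matrix.fromCols 1 (-M)

/-- The complementary index. -/
def bar {n : ℕ} : Fin n ⊕ Fin n → Fin n ⊕ Fin n
  | .inl i => .inr i
  | .inr i => .inl i

/-- `B` is a basis of `A = [I, -M]`: `n` linearly independent columns. -/
def IsBasis {n : ℕ} (M : Matrix (Fin n) (Fin n) ℝ) (B : Finset (Fin n ⊕ Fin n)) : Prop :=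
  B.card = n ∧ LinearIndependent ℝ (fun j : B => (Amat M)ᵀ (j : Fin n ⊕ Fin n))

/-- A complementary basis: a basis containing exactly one of each complementary pair. -/
def IsComplBasis {n : ℕ} (M : Matrix (Fin n) (Fin n) ℝ) (B : Finset (Fin n ⊕ Fin n)) : Prop :=
  IsBasis M B ∧ ∀ i : Fin n, Xor' (Sum.inl i ∈ B) (Sum.inr i ∈ B)

/-- The complementary cone `𝒞(J)`: nonnegative combinations of the columns of `A` indexed by `J`. -/
def coneOf {n : ℕ} (M : Matrix (Fin n) (Fin n) ℝ) (J : Finset (Fin n ⊕ Fin n)) :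
    Set (Fin n → ℝ) :=
  {y | ∃ c : Fin n ⊕ Fin n → ℝ, (∀ j, 0 ≤ c j) ∧ (∀ j ∉ J, c j = 0) ∧ y = (Amat M).mulVec c}

/-!
Let `S = 𝒞(B) ∩ 𝒞(B')` for complementary bases `B ≠ B'`. A point of `S` has nonnegative
coordinates `c` in `B` and `c'` in `B'`, and sufficiency of `M` forces `c j * c' (bar j) = 0`
for every `j`. Since `S` is closed under addition, for every pair `i` switched between `B` and
`B'` either the `B`-coordinate or the `B'`-coordinate at pair `i` vanishes on all of `S`. Two
vanishing coordinates of one basis would cut the dimension of `S` down to `n - 2`, so an adjacent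
`B'` switches one or two pairs, and `B'` is determined by the switched pairs: there are at most
`n + n.choose 2` neighbours.
-/

open Finset

theorem Module.Basis.finrank_vectorSpan_add_card_le {K V ι : Type*} [Field K] [AddCommGroup V]
    [Module K V] [Fintype ι] (b : Module.Basis ι K V) {S : Set V} (s : Finset ι)
    (hs : ∀ j ∈ s, ∀ y ∈ S, b.repr y j = 0) :
    Module.finrank K (vectorSpan K S) + #s ≤ Fintype.card ι := by
  classical
  have := Module.Finite.of_basis b
  have hspan : vectorSpan K S ≤ Submodule.span K (b '' ↑sᶜ) := by
    rw [vectorSpan_def, Submodule.span_le]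
    rintro _ ⟨x, hx, y, hy, rfl⟩
    rw [SetLike.mem_coe, b.mem_span_image]
    intro j hj
    rw [coe_compl, Set.mem_compl_iff, mem_coe]
    intro hjs
    simp [hs j hjs x hx, hs j hjs y hy] at hj
  calc Module.finrank K (vectorSpan K S) + #s
      ≤ #sᶜ + #s := by
        gcongr
        refine (Submodule.finrank_mono hspan).trans ?_
        rw [← coe_image]
        exact (finrank_span_finset_le_card _).trans card_image_le
    _ = Fintype.card ι := card_compl_add_card s

theorem forall_eq_zero_or_forall_eq_zero_of_mul_eq_zero {V : Type*} [AddCommMonoid V]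
    [Module ℝ V] {S : Set V} (hS : ∀ x ∈ S, ∀ y ∈ S, x + y ∈ S) (f g : V →ₗ[ℝ] ℝ)
    (hf : ∀ x ∈ S, 0 ≤ f x) (hg : ∀ x ∈ S, 0 ≤ g x) (hfg : ∀ x ∈ S, f x * g x = 0) :
    (∀ x ∈ S, f x = 0) ∨ ∀ x ∈ S, g x = 0 := by
  by_contra! ⟨⟨x, hx, hfx⟩, ⟨y, hy, hgy⟩⟩
  have hf_pos : 0 < f (x + y) := by
    rw [map_add]; linarith [(hf x hx).lt_of_ne' hfx, hf y hy]
  have hg_pos : 0 < g (x + y) := by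
    rw [map_add]; linarith [(hg y hy).lt_of_ne' hgy, hg x hx]
  exact (mul_pos hf_pos hg_pos).ne' (hfg _ (hS x hx y hy))

theorem ColSuff.mul_eq_zero_of_sub_mulVec_eq {n : ℕ} {M : Matrix (Fin n) (Fin n) ℝ}
    (hM : ColSuff M) {w z w' z' : Fin n → ℝ} (hw : 0 ≤ w) (hz : 0 ≤ z) (hw' : 0 ≤ w')
    (hz' : 0 ≤ z') (hwz : ∀ i, w i * z i = 0) (hwz' : ∀ i, w' i * z' i = 0)
    (h : w - M *ᵥ z = w' - M *ᵥ z') (i : Fin n) :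
    w i * z' i = 0 ∧ w' i * z i = 0 := by
  have hMu : M *ᵥ (z - z') = w - w' := by
    rw [mulVec_sub]; linear_combination -h
  -- `z - z'` is sign-reversed by `M`, so column sufficiency forces equality termwise.
  have hu : ∀ k, (z - z') k * (M *ᵥ (z - z')) k = -(w k * z' k + w' k * z k) := by
    intro k
    simp only [hMu, Pi.sub_apply]
    linear_combination hwz k + hwz' k
  have h0 := hM (z - z') (fun k => by
    rw [hu]; nlinarith [mul_nonneg (hw k) (hz' k), mul_nonneg (hw' k) (hz k)]) i
  rw [hu] at h0
  constructor <;> nlinarith [mul_nonneg (hw i) (hz' i), mul_nonneg (hw' i) (hz i)]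

theorem Amat_mulVec {n : ℕ} (M : Matrix (Fin n) (Fin n) ℝ) (c : Fin n ⊕ Fin n → ℝ) :
    Amat M *ᵥ c = c ∘ Sum.inl - M *ᵥ (c ∘ Sum.inr) := by
  rw [Amat, ← Sum.elim_comp_inl_inr c, fromCols_mulVec_sumElim, one_mulVec, neg_mulVec,
    ← sub_eq_add_neg]
  rfl

theorem apply_inl_mul_apply_inr_eq_zero {n : ℕ} {B : Finset (Fin n ⊕ Fin n)}
    (hB : ∀ i : Fin n, Xor (Sum.inl i ∈ B) (Sum.inr i ∈ B)) {c : Fin n ⊕ Fin n → ℝ}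
    (hc : ∀ j ∉ B, c j = 0) (i : Fin n) : c (Sum.inl i) * c (Sum.inr i) = 0 := by
  rcases hB i with ⟨-, h⟩ | ⟨-, h⟩ <;> simp [hc _ h]

theorem ColSuff.mul_bar_eq_zero {n : ℕ} {M : Matrix (Fin n) (Fin n) ℝ} (hM : ColSuff M)
    {B B' : Finset (Fin n ⊕ Fin n)} (hB : ∀ i : Fin n, Xor (Sum.inl i ∈ B) (Sum.inr i ∈ B))
    (hB' : ∀ i : Fin n, Xor (Sum.inl i ∈ B') (Sum.inr i ∈ B')) {c c' : Fin n ⊕ Fin n → ℝ}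
    (hc : 0 ≤ c) (hcB : ∀ j ∉ B, c j = 0) (hc' : 0 ≤ c') (hcB' : ∀ j ∉ B', c' j = 0)
    (h : Amat M *ᵥ c = Amat M *ᵥ c') (j : Fin n ⊕ Fin n) : c j * c' (bar j) = 0 := by
  rw [Amat_mulVec, Amat_mulVec] at h
  have key i := hM.mul_eq_zero_of_sub_mulVec_eq (fun k => hc _) (fun k => hc _)
    (fun k => hc' _) (fun k => hc' _) (apply_inl_mul_apply_inr_eq_zero hB hcB)
    (apply_inl_mul_apply_inr_eq_zero hB' hcB') h i
  rcases j with i | i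
  · exact (key i).1
  · rw [mul_comm]; exact (key i).2

section Coordinates

variable {n : ℕ} {M : Matrix (Fin n) (Fin n) ℝ} {B B' : Finset (Fin n ⊕ Fin n)}

theorem coneOf_add_mem {J : Finset (Fin n ⊕ Fin n)} {x y : Fin n → ℝ} (hx : x ∈ coneOf M J)
    (hy : y ∈ coneOf M J) : x + y ∈ coneOf M J := by
  obtain ⟨c, hc, hcJ, rfl⟩ := hx
  obtain ⟨d, hd, hdJ, rfl⟩ := hy
  exact ⟨c + d, fun j => add_nonneg (hc j) (hd j), fun j hj => by simp [hcJ j hj, hdJ j hj],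
    (mulVec_add _ _ _).symm⟩

noncomputable def IsBasis.basis (hB : IsBasis M B) : Module.Basis B ℝ (Fin n → ℝ) :=
  basisOfLinearIndependentOfCardEqFinrank' _ hB.2 (by simp [hB.1])

theorem IsBasis.repr_mulVec (hB : IsBasis M B) {c : Fin n ⊕ Fin n → ℝ}
    (hc : ∀ j ∉ B, c j = 0) (j : B) : hB.basis.repr (Amat M *ᵥ c) j = c j := by
  have : Amat M *ᵥ c = ∑ k : B, c k • hB.basis k := by
    rw [IsBasis.basis, coe_basisOfLinearIndependentOfCardEqFinrank', mulVec_eq_sum,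
      ← sum_subset B.subset_univ fun k _ hk => by simp [hc k hk],
      ← sum_coe_sort B]
    simp
  rw [this, Module.Basis.repr_sum_self]

theorem IsBasis.repr_nonneg (hB : IsBasis M B) {y : Fin n → ℝ} (hy : y ∈ coneOf M B) (j : B) :
    0 ≤ hB.basis.repr y j := by
  obtain ⟨c, hc, hcB, rfl⟩ := hy
  rw [hB.repr_mulVec hcB]
  exact hc j

theorem IsComplBasis.coord_eq_zero_or_coord_bar_eq_zero (hB : IsComplBasis M B) (hM : ColSuff M)
    (hB' : IsComplBasis M B') {j : Fin n ⊕ Fin n} (hj : j ∈ B) (hj' : bar j ∈ B') :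
    (∀ y ∈ coneOf M B ∩ coneOf M B', hB.1.basis.repr y ⟨j, hj⟩ = 0) ∨
      ∀ y ∈ coneOf M B ∩ coneOf M B', hB'.1.basis.repr y ⟨bar j, hj'⟩ = 0 := by
  refine forall_eq_zero_or_forall_eq_zero_of_mul_eq_zero (S := coneOf M B ∩ coneOf M B')
    (fun x hx y hy => ⟨coneOf_add_mem hx.1 hy.1, coneOf_add_mem hx.2 hy.2⟩)
    (hB.1.basis.coord ⟨j, hj⟩) (hB'.1.basis.coord ⟨bar j, hj'⟩)
    (fun y hy => hB.1.repr_nonneg hy.1 _) (fun y hy => hB'.1.repr_nonneg hy.2 _) ?_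
  rintro y ⟨⟨c, hc, hcB, rfl⟩, ⟨c', hc', hcB', hcc'⟩⟩
  simp only [Module.Basis.coord_apply]
  rw [hB.1.repr_mulVec hcB, hcc', hB'.1.repr_mulVec hcB']
  exact hM.mul_bar_eq_zero hB.2 hB'.2 hc hcB hc' hcB' hcc' j

theorem IsBasis.eq_of_repr_eq_zero (hB : IsBasis M B) {S : Set (Fin n → ℝ)}
    (hS : n ≤ Module.finrank ℝ (vectorSpan ℝ S) + 1) {j₁ j₂ : B}
    (h₁ : ∀ y ∈ S, hB.basis.repr y j₁ = 0) (h₂ : ∀ y ∈ S, hB.basis.repr y j₂ = 0) :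
    j₁ = j₂ := by
  classical
  by_contra hne
  have := hB.basis.finrank_vectorSpan_add_card_le (S := S) {j₁, j₂}
    (by simp only [mem_insert, mem_singleton]; rintro j (rfl | rfl); exacts [h₁, h₂])
  rw [card_pair hne, Fintype.card_coe, hB.1] at this
  omega

end Coordinates

section Pivots

variable {n : ℕ}

/-- The indices `i` at which `B` and `B'` contain different elements of `{inl i, inr i}`; one such
index is a diagonal pivot, two are an exchange pivot. -/
def pivotIndices (B B' : Finset (Fin n ⊕ Fin n)) : Finset (Fin n) :=
  univ.filter fun i => ¬(Sum.inl i ∈ B ↔ Sum.inl i ∈ B')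

theorem eq_of_forall_inl_mem_iff {B B' : Finset (Fin n ⊕ Fin n)}
    (hB : ∀ i : Fin n, Xor (Sum.inl i ∈ B) (Sum.inr i ∈ B))
    (hB' : ∀ i : Fin n, Xor (Sum.inl i ∈ B') (Sum.inr i ∈ B'))
    (h : ∀ i : Fin n, Sum.inl i ∈ B ↔ Sum.inl i ∈ B') : B = B' := by
  ext (i | i)
  · exact h i
  · have := hB i; have := hB' i; have := h i
    unfold Xor at *
    tauto

theorem pivotIndices_nonempty {B B' : Finset (Fin n ⊕ Fin n)}
    (hB : ∀ i : Fin n, Xor (Sum.inl i ∈ B) (Sum.inr i ∈ B))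
    (hB' : ∀ i : Fin n, Xor (Sum.inl i ∈ B') (Sum.inr i ∈ B')) (hne : B' ≠ B) :
    (pivotIndices B B').Nonempty := by
  by_contra! h
  have : ∀ i : Fin n, Sum.inl i ∈ B ↔ Sum.inl i ∈ B' := by
    simpa [pivotIndices, filter_eq_empty_iff] using h
  exact hne (eq_of_forall_inl_mem_iff hB hB' this).symm

theorem pivotIndices_injOn (B : Finset (Fin n ⊕ Fin n)) :
    Set.InjOn (pivotIndices B) {B' | ∀ i : Fin n, Xor (Sum.inl i ∈ B') (Sum.inr i ∈ B')} := by
  intro B₁ hB₁ B₂ hB₂ h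
  refine eq_of_forall_inl_mem_iff hB₁ hB₂ fun i => ?_
  have := congrArg (i ∈ ·) h
  simp only [pivotIndices, mem_filter, mem_univ, true_and, eq_iff_iff] at this
  tauto

theorem exists_mem_bar_mem_of_mem_pivotIndices {B B' : Finset (Fin n ⊕ Fin n)}
    (hB : ∀ i : Fin n, Xor (Sum.inl i ∈ B) (Sum.inr i ∈ B))
    (hB' : ∀ i : Fin n, Xor (Sum.inl i ∈ B') (Sum.inr i ∈ B')) {i : Fin n}
    (hi : i ∈ pivotIndices B B') : ∃ j ∈ B, bar j ∈ B' ∧ Sum.elim id id j = i := by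
  simp only [pivotIndices, mem_filter, mem_univ, true_and] at hi
  have := hB i; have := hB' i
  unfold Xor at *
  by_cases h : Sum.inl i ∈ B
  · exact ⟨Sum.inl i, h, by simp only [bar]; tauto, rfl⟩
  · exact ⟨Sum.inr i, by tauto, by simp only [bar]; tauto, rfl⟩

theorem IsComplBasis.card_pivotIndices_le_two {M : Matrix (Fin n) (Fin n) ℝ}
    {B B' : Finset (Fin n ⊕ Fin n)} (hB : IsComplBasis M B) (hM : ColSuff M)
    (hB' : IsComplBasis M B')
    (hadj : n ≤ Module.finrank ℝ (vectorSpan ℝ (coneOf M B ∩ coneOf M B')) + 1) :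
    #(pivotIndices B B') ≤ 2 := by
  classical
  set S := coneOf M B ∩ coneOf M B'
  set X := (univ : Finset B).filter fun j => ∀ y ∈ S, hB.1.basis.repr y j = 0
  set X' := (univ : Finset B').filter fun j => ∀ y ∈ S, hB'.1.basis.repr y j = 0
  have hX : #X ≤ 1 := card_le_one.2 fun a ha b hb =>
    hB.1.eq_of_repr_eq_zero hadj (mem_filter.1 ha).2 (mem_filter.1 hb).2
  have hX' : #X' ≤ 1 := card_le_one.2 fun a ha b hb =>
    hB'.1.eq_of_repr_eq_zero hadj (mem_filter.1 ha).2 (mem_filter.1 hb).2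
  have hsub : pivotIndices B B' ⊆
      X.image (fun j => Sum.elim id id j.1) ∪ X'.image (fun j => Sum.elim id id j.1) := by
    intro i hi
    obtain ⟨j, hj, hj', rfl⟩ := exists_mem_bar_mem_of_mem_pivotIndices hB.2 hB'.2 hi
    rcases hB.coord_eq_zero_or_coord_bar_eq_zero hM hB' hj hj' with h | h
    · exact mem_union_left _ (mem_image.2 ⟨⟨j, hj⟩, mem_filter.2 ⟨mem_univ _, h⟩, rfl⟩)
    · refine mem_union_right _ (mem_image.2 ⟨⟨bar j, hj'⟩, mem_filter.2 ⟨mem_univ _, h⟩, ?_⟩)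
      rcases j with i | i <;> rfl
  calc #(pivotIndices B B') ≤ #X + #X' :=
        (card_le_card hsub).trans <| (card_union_le _ _).trans <|
          add_le_add card_image_le card_image_le
    _ ≤ 2 := by omega

end Pivots

theorem stmt_19 {n : ℕ} (M : Matrix (Fin n) (Fin n) ℝ) (hM : Suff M)
    (B : Finset (Fin n ⊕ Fin n)) (hB : IsComplBasis M B) :
    {B' : Finset (Fin n ⊕ Fin n) | IsComplBasis M B' ∧ B' ≠ B ∧
      Module.finrank ℝ (vectorSpan ℝ (coneOf M B ∩ coneOf M B')) = n - 1}.ncard ≤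
      n + (n ^ 2 - n) / 2 := by
  calc _ ≤ #(powersetCard 1 univ ∪ powersetCard 2 univ : Finset (Finset (Fin n))) := by
        rw [← Set.ncard_coe_finset]
        refine Set.ncard_le_ncard_of_injOn (pivotIndices B) ?_
          ((pivotIndices_injOn B).mono fun B' hB' => hB'.1.2) (Set.toFinite _)
        rintro B' ⟨hB', hne, hadj⟩
        have := (pivotIndices_nonempty hB.2 hB'.2 hne).card_pos
        have := hB.card_pivotIndices_le_two hM.1 hB' (by omega)
        rw [mem_coe, mem_union, mem_powersetCard_univ, mem_powersetCard_univ]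
        omega
    _ ≤ n.choose 1 + n.choose 2 := (card_union_le _ _).trans (by simp)
    _ = n + (n ^ 2 - n) / 2 := by
      rw [Nat.choose_one_right, Nat.choose_two_right, Nat.mul_sub_one, sq]
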